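/- arXiv:2004.04575 — 3 statements merged into one kernel-verified Lean document; each statement's English description precedes it below -/
import Mathlib

section
/- Let M ≥ 1 and let δ : ℤ → ℝ be a sequence with δ n > 0 for all n that satisfies the quasisymmetric shear condition with constant M. Then the piecewise linear developing map h_δ satisfies the M′-quasisymmetry condition with M′ = max(3M³, M¹⁰); that is, for every x ∈ ℝ and every t > 0, 1/M′ ≤ (h_δ(x+t) − h_δ(x))/(h_δ(x) − h_δ(x−t)) ≤ M′. -/
/-- `Hmap δ n` is the value at the integer `n` of the developing map:
`H 0 = 0`, `H (n+1) = H n + δ n`. -/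
noncomputable def Hmap (δ : ℤ → ℝ) (n : ℤ) : ℝ :=
  if 0 ≤ n then ∑ j ∈ Finset.range n.toNat, δ j
  else -∑ j ∈ Finset.range (-n).toNat, δ (n + j)

/-- The piecewise linear developing map associated to the sequence `δ`. -/
noncomputable def hdev (δ : ℤ → ℝ) (x : ℝ) : ℝ :=
  Hmap δ ⌊x⌋ + δ ⌊x⌋ * (x - (⌊x⌋ : ℝ))

/-- The quasisymmetric shear condition with constant `M` for a positive sequence `δ`:
`1/M ≤ (δ m + ⋯ + δ (m+k)) / (δ (m-1) + ⋯ + δ (m-k-1)) ≤ M`. -/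
def ShearQS (δ : ℤ → ℝ) (M : ℝ) : Prop :=
  ∀ (m : ℤ) (k : ℕ),
    1 / M ≤ (∑ i ∈ Finset.range (k + 1), δ (m + (i : ℤ))) /
        (∑ i ∈ Finset.range (k + 1), δ (m - 1 - (i : ℤ))) ∧
      (∑ i ∈ Finset.range (k + 1), δ (m + (i : ℤ))) /
        (∑ i ∈ Finset.range (k + 1), δ (m - 1 - (i : ℤ))) ≤ M

/-- The `M`-quasisymmetry condition for a map `h : ℝ → ℝ`. -/
def QSCond (h : ℝ → ℝ) (M : ℝ) : Prop :=
  ∀ (x t : ℝ), 0 < t →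
    1 / M ≤ (h (x + t) - h x) / (h x - h (x - t)) ∧
      (h (x + t) - h x) / (h x - h (x - t)) ≤ M

/-! On each unit cell `hdev δ` is affine, and so is every integer translate of it; hence for
`t ≥ 1`, after rounding `t` down to `k = ⌊t⌋₊` and using monotonicity, the two increments need
only be compared at integer points. There the shear condition at scale `k + 1`, together with one
comparison of adjacent `δ`'s, gives the factor `M (M + 1)`. For `t ≤ 1` both increments lie
between `δ ⌊x⌋ * t / M` and `M * δ ⌊x⌋ * t`, since they only see slopes adjacent to `δ ⌊x⌋`.
Finally `M (M + 1) ≤ 3 M³`. -/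

open Set

section Developing

variable {δ : ℤ → ℝ}

lemma Hmap_succ (δ : ℤ → ℝ) (n : ℤ) : Hmap δ (n + 1) = Hmap δ n + δ n := by
  unfold Hmap
  rcases lt_trichotomy n (-1) with hn | rfl | hn
  · rw [if_neg (by omega), if_neg (by omega),
      show (-n).toNat = (-(n + 1)).toNat + 1 by omega, Finset.sum_range_succ']
    simp only [Nat.cast_add, Nat.cast_one, Nat.cast_zero, add_zero, ← add_assoc]
    ring_nf
  · norm_num
  · rw [if_pos (by omega), if_pos (by omega), show (n + 1).toNat = n.toNat + 1 by omega,
      Finset.sum_range_succ, Int.toNat_of_nonneg (by omega)]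

lemma Hmap_add_natCast_sub (δ : ℤ → ℝ) (m : ℤ) (l : ℕ) :
    Hmap δ (m + l) - Hmap δ m = ∑ i ∈ Finset.range l, δ (m + i) := by
  induction l with
  | zero => simp
  | succ l ih =>
    rw [Finset.sum_range_succ, ← ih, Nat.cast_succ, ← add_assoc, Hmap_succ]
    ring

lemma Hmap_sub_Hmap_sub_natCast (δ : ℤ → ℝ) (m : ℤ) (l : ℕ) :
    Hmap δ m - Hmap δ (m - l) = ∑ i ∈ Finset.range l, δ (m - 1 - i) := by
  induction l with
  | zero => simp
  | succ l ih =>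
    have := Hmap_succ δ (m - 1 - l)
    rw [show m - 1 - l + 1 = m - l by ring] at this
    rw [Finset.sum_range_succ, ← ih, Nat.cast_succ, show m - (l + 1) = m - 1 - l by ring]
    linarith

lemma Hmap_strictMono (hpos : ∀ n, 0 < δ n) : StrictMono (Hmap δ) :=
  strictMono_int_of_lt_succ fun n => by rw [Hmap_succ]; linarith [hpos n]

lemma hdev_eq_of_mem_Icc {m : ℤ} {y : ℝ} (hy : y ∈ Icc (m : ℝ) (m + 1)) :
    hdev δ y = Hmap δ m + δ m * (y - m) := by
  rcases hy.2.eq_or_lt with rfl | hlt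
  · rw [hdev, show (m : ℝ) + 1 = ((m + 1 : ℤ) : ℝ) by push_cast; ring, Int.floor_intCast,
      Hmap_succ]
    push_cast
    ring
  · rw [hdev, Int.floor_eq_on_Ico m y ⟨hy.1, hlt⟩]

lemma hdev_strictMono (hpos : ∀ n, 0 < δ n) : StrictMono (hdev δ) := by
  intro x y hxy
  have hx := Int.floor_le x
  have hx' := Int.lt_floor_add_one x
  rcases (Int.floor_le_floor hxy.le).eq_or_lt with heq | hlt
  · simp only [hdev, heq]
    nlinarith [hpos ⌊y⌋]
  · calc hdev δ x < Hmap δ (⌊x⌋ + 1) := by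
          rw [hdev, Hmap_succ]; nlinarith [hpos ⌊x⌋]
      _ ≤ Hmap δ ⌊y⌋ := (Hmap_strictMono hpos).monotone (by omega)
      _ ≤ hdev δ y := by
          rw [hdev]; nlinarith [hpos ⌊y⌋, Int.floor_le y]

lemma hdev_add_intCast_eq {m : ℤ} {y : ℝ} (hy : y ∈ Icc (m : ℝ) (m + 1)) (j : ℤ) :
    hdev δ (y + j) = (1 - (y - m)) * Hmap δ (m + j) + (y - m) * Hmap δ (m + 1 + j) := by
  have hyj : y + j ∈ Icc ((m + j : ℤ) : ℝ) ((m + j : ℤ) + 1) := by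
    push_cast; constructor <;> linarith [hy.1, hy.2]
  rw [hdev_eq_of_mem_Icc hyj, show m + 1 + j = m + j + 1 by ring, Hmap_succ]
  push_cast
  ring

lemma hdev_sub_le_of_Hmap_sub_le (K : ℝ) (a b c d : ℤ)
    (h : ∀ m, Hmap δ (m + a) - Hmap δ (m + b) ≤ K * (Hmap δ (m + c) - Hmap δ (m + d)))
    (x : ℝ) : hdev δ (x + a) - hdev δ (x + b) ≤ K * (hdev δ (x + c) - hdev δ (x + d)) := by
  have hx : x ∈ Icc (⌊x⌋ : ℝ) (⌊x⌋ + 1) := ⟨Int.floor_le x, (Int.lt_floor_add_one x).le⟩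
  have hs : 0 ≤ x - ⌊x⌋ := by linarith [hx.1]
  have hs' : 0 ≤ 1 - (x - ⌊x⌋) := by linarith [hx.2]
  simp only [hdev_add_intCast_eq hx]
  nlinarith [mul_le_mul_of_nonneg_left (h ⌊x⌋) hs', mul_le_mul_of_nonneg_left (h (⌊x⌋ + 1)) hs]

lemma hdev_sub_mem_Icc {x y L U : ℝ} (hxy : x ≤ y) (hyx : y ≤ x + 1)
    (hδ : ∀ j, ⌊x⌋ ≤ j → j ≤ ⌊x⌋ + 1 → δ j ∈ Icc L U) :
    hdev δ y - hdev δ x ∈ Icc (L * (y - x)) (U * (y - x)) := by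
  set n := ⌊x⌋
  have hx : x ∈ Icc (n : ℝ) (n + 1) := ⟨Int.floor_le x, (Int.lt_floor_add_one x).le⟩
  obtain ⟨hL, hU⟩ := hδ n le_rfl (by omega)
  rw [hdev_eq_of_mem_Icc hx]
  rcases le_total y (n + 1) with hy | hy
  · rw [hdev_eq_of_mem_Icc ⟨hx.1.trans hxy, hy⟩]
    constructor <;> nlinarith
  · obtain ⟨hL', hU'⟩ := hδ (n + 1) (by omega) le_rfl
    have hy' : y ∈ Icc ((n + 1 : ℤ) : ℝ) ((n + 1 : ℤ) + 1) := by
      push_cast; constructor <;> linarith [hx.2]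
    rw [hdev_eq_of_mem_Icc hy', Hmap_succ]
    push_cast
    constructor <;> nlinarith [hx.2]

end Developing

lemma qsCond_of_sub_le {h : ℝ → ℝ} {K : ℝ} (hK : 0 < K) (hh : StrictMono h)
    (hfw : ∀ x t, 0 < t → h (x + t) - h x ≤ K * (h x - h (x - t)))
    (hbw : ∀ x t, 0 < t → h x - h (x - t) ≤ K * (h (x + t) - h x)) : QSCond h K := by
  intro x t ht
  have hB : 0 < h x - h (x - t) := sub_pos.2 (hh (by linarith))
  rw [div_le_div_iff₀ hK hB, div_le_iff₀ hB]
  constructor <;> linarith [hfw x t ht, hbw x t ht]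

lemma QSCond.mono {h : ℝ → ℝ} {K K' : ℝ} (hh : QSCond h K) (hK : 0 < K) (hKK' : K ≤ K') :
    QSCond h K' := fun x t ht =>
  ⟨(one_div_le_one_div_of_le hK hKK').trans (hh x t ht).1, (hh x t ht).2.trans hKK'⟩

lemma le_sq_mul_of_mem_Icc {a b s M : ℝ} (hM : 0 < M) (ha : a ∈ Icc (s / M) (M * s))
    (hb : b ∈ Icc (s / M) (M * s)) : a ≤ M ^ 2 * b :=
  calc a ≤ M * s := ha.2
    _ = M ^ 2 * (s / M) := by field_simp
    _ ≤ M ^ 2 * b := by gcongr; exact hb.1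

namespace ShearQS

variable {δ : ℤ → ℝ} {M : ℝ}

lemma Hmap_add_sub_le (h : ShearQS δ M) (hpos : ∀ n, 0 < δ n) (m : ℤ) {l : ℕ} (hl : 0 < l) :
    Hmap δ (m + l) - Hmap δ m ≤ M * (Hmap δ m - Hmap δ (m - l)) := by
  obtain ⟨k, rfl⟩ : ∃ k, l = k + 1 := ⟨l - 1, by omega⟩
  have hB : 0 < Hmap δ m - Hmap δ (m - (k + 1 : ℕ)) :=
    sub_pos.2 (Hmap_strictMono hpos (by omega))
  have := (h m k).2
  rw [← Hmap_add_natCast_sub, ← Hmap_sub_Hmap_sub_natCast, div_le_iff₀ hB] at this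
  linarith

lemma Hmap_sub_sub_le (h : ShearQS δ M) (hpos : ∀ n, 0 < δ n) (hM : 0 < M) (m : ℤ) {l : ℕ}
    (hl : 0 < l) : Hmap δ m - Hmap δ (m - l) ≤ M * (Hmap δ (m + l) - Hmap δ m) := by
  obtain ⟨k, rfl⟩ : ∃ k, l = k + 1 := ⟨l - 1, by omega⟩
  have hB : 0 < Hmap δ m - Hmap δ (m - (k + 1 : ℕ)) :=
    sub_pos.2 (Hmap_strictMono hpos (by omega))
  have := (h m k).1
  rw [← Hmap_add_natCast_sub, ← Hmap_sub_Hmap_sub_natCast, div_le_div_iff₀ hM hB] at this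
  linarith

lemma le_mul_pred_and_pred_le_mul (h : ShearQS δ M) (hpos : ∀ n, 0 < δ n) (hM : 0 < M)
    (m : ℤ) : δ m ≤ M * δ (m - 1) ∧ δ (m - 1) ≤ M * δ m := by
  have hnext : Hmap δ (m + (1 : ℕ)) - Hmap δ m = δ m := by simp [Hmap_succ]
  have hprev : Hmap δ m - Hmap δ (m - (1 : ℕ)) = δ (m - 1) := by
    simpa using Hmap_sub_Hmap_sub_natCast δ m 1
  have hup := h.Hmap_add_sub_le hpos m one_pos
  have hdown := h.Hmap_sub_sub_le hpos hM m one_pos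
  rw [hnext, hprev] at hup hdown
  exact ⟨hup, hdown⟩

lemma le_mul_of_abs_sub_le_one (h : ShearQS δ M) (hpos : ∀ n, 0 < δ n) (hM : 1 ≤ M)
    {j n : ℤ} (hjn : |j - n| ≤ 1) : δ j ≤ M * δ n := by
  obtain rfl | rfl | rfl : j = n - 1 ∨ j = n ∨ j = n + 1 := by rw [abs_le] at hjn; omega
  · exact (h.le_mul_pred_and_pred_le_mul hpos (by linarith) n).2
  · nlinarith [hpos j]
  · simpa using (h.le_mul_pred_and_pred_le_mul hpos (by linarith) (n + 1)).1

lemma mem_Icc_of_abs_sub_le_one (h : ShearQS δ M) (hpos : ∀ n, 0 < δ n) (hM : 1 ≤ M)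
    {j n : ℤ} (hjn : |j - n| ≤ 1) : δ j ∈ Icc (δ n / M) (M * δ n) :=
  ⟨(div_le_iff₀ (by linarith)).2 (by
      rw [mul_comm]; exact h.le_mul_of_abs_sub_le_one hpos hM (by rwa [abs_sub_comm])),
    h.le_mul_of_abs_sub_le_one hpos hM hjn⟩

lemma Hmap_add_succ_sub_le (h : ShearQS δ M) (hpos : ∀ n, 0 < δ n) (hM : 1 ≤ M) (m : ℤ)
    {k : ℕ} (hk : 0 < k) :
    Hmap δ (m + (k + 1)) - Hmap δ m ≤ M * (M + 1) * (Hmap δ m - Hmap δ (m - k)) := by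
  have hshear := h.Hmap_add_sub_le hpos m k.succ_pos
  push_cast at hshear
  have hstep : δ (m - (k + 1)) ≤ M * δ (m - k) :=
    h.le_mul_of_abs_sub_le_one hpos hM (by rw [abs_le]; omega)
  have hfirst : δ (m - k) ≤ Hmap δ m - Hmap δ (m - k) := by
    rw [le_sub_iff_add_le', ← Hmap_succ]
    exact (Hmap_strictMono hpos).monotone (by omega)
  have hback : Hmap δ m - Hmap δ (m - (k + 1)) ≤ (M + 1) * (Hmap δ m - Hmap δ (m - k)) := by
    have := Hmap_succ δ (m - (k + 1))
    rw [show m - (k + 1) + 1 = m - k by ring] at this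
    nlinarith [mul_le_mul_of_nonneg_left hfirst (by linarith : 0 ≤ M)]
  calc Hmap δ (m + (k + 1)) - Hmap δ m ≤ M * (Hmap δ m - Hmap δ (m - (k + 1))) := hshear
    _ ≤ M * ((M + 1) * (Hmap δ m - Hmap δ (m - k))) := by gcongr
    _ = M * (M + 1) * (Hmap δ m - Hmap δ (m - k)) := by ring

lemma Hmap_sub_succ_le (h : ShearQS δ M) (hpos : ∀ n, 0 < δ n) (hM : 1 ≤ M) (m : ℤ)
    {k : ℕ} (hk : 0 < k) :
    Hmap δ m - Hmap δ (m - (k + 1)) ≤ M * (M + 1) * (Hmap δ (m + k) - Hmap δ m) := by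
  have hshear := h.Hmap_sub_sub_le hpos (by linarith) m k.succ_pos
  push_cast at hshear
  have hstep : δ (m + k) ≤ M * δ (m + k - 1) :=
    h.le_mul_of_abs_sub_le_one hpos hM (by rw [abs_le]; omega)
  have hlast : δ (m + k - 1) ≤ Hmap δ (m + k) - Hmap δ m := by
    have := Hmap_succ δ (m + k - 1)
    rw [sub_add_cancel] at this
    linarith [(Hmap_strictMono hpos).monotone (show m ≤ m + k - 1 by omega)]
  have hfwd : Hmap δ (m + (k + 1)) - Hmap δ m ≤ (M + 1) * (Hmap δ (m + k) - Hmap δ m) := by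
    rw [← add_assoc, Hmap_succ]
    nlinarith [mul_le_mul_of_nonneg_left hlast (by linarith : 0 ≤ M)]
  calc Hmap δ m - Hmap δ (m - (k + 1)) ≤ M * (Hmap δ (m + (k + 1)) - Hmap δ m) := hshear
    _ ≤ M * ((M + 1) * (Hmap δ (m + k) - Hmap δ m)) := by gcongr
    _ = M * (M + 1) * (Hmap δ (m + k) - Hmap δ m) := by ring

lemma hdev_sub_mem_Icc_of_le_one (h : ShearQS δ M) (hpos : ∀ n, 0 < δ n) (hM : 1 ≤ M)
    (x : ℝ) {t : ℝ} (ht0 : 0 ≤ t) (ht1 : t ≤ 1) :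
    hdev δ (x + t) - hdev δ x ∈ Icc (δ ⌊x⌋ * t / M) (M * (δ ⌊x⌋ * t)) ∧
      hdev δ x - hdev δ (x - t) ∈ Icc (δ ⌊x⌋ * t / M) (M * (δ ⌊x⌋ * t)) := by
  have hadj (j : ℤ) (hj : |j - ⌊x⌋| ≤ 1) : δ j ∈ Icc (δ ⌊x⌋ / M) (M * δ ⌊x⌋) :=
    h.mem_Icc_of_abs_sub_le_one hpos hM hj
  have hp : ⌊x⌋ - 1 ≤ ⌊x - t⌋ := Int.le_floor.2 (by push_cast; linarith [Int.floor_le x])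
  have hp' : ⌊x - t⌋ ≤ ⌊x⌋ := Int.floor_le_floor (by linarith)
  have hA := hdev_sub_mem_Icc (δ := δ) (x := x) (y := x + t) (by linarith) (by linarith)
    fun j hj hj' => hadj j (by rw [abs_le]; omega)
  have hB := hdev_sub_mem_Icc (δ := δ) (x := x - t) (y := x) (by linarith) (by linarith)
    fun j hj hj' => hadj j (by rw [abs_le]; omega)
  rw [add_sub_cancel_left] at hA
  rw [sub_sub_cancel] at hB
  rw [div_mul_eq_mul_div, mul_assoc] at hA hB
  exact ⟨hA, hB⟩

lemma hdev_add_sub_le (h : ShearQS δ M) (hpos : ∀ n, 0 < δ n) (hM : 1 ≤ M) (x : ℝ) {t : ℝ}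
    (ht : 0 < t) : hdev δ (x + t) - hdev δ x ≤ M * (M + 1) * (hdev δ x - hdev δ (x - t)) := by
  have hmono := (hdev_strictMono hpos).monotone
  rcases le_or_gt t 1 with ht1 | ht1
  · obtain ⟨hA, hB⟩ := h.hdev_sub_mem_Icc_of_le_one hpos hM x ht.le ht1
    have hB0 : 0 ≤ hdev δ x - hdev δ (x - t) := sub_nonneg.2 (hmono (by linarith))
    nlinarith [le_sq_mul_of_mem_Icc (by linarith) hA hB]
  · set k := ⌊t⌋₊
    have hk : 0 < k := Nat.floor_pos.2 ht1.le
    have hkt : (k : ℝ) ≤ t := Nat.floor_le ht.le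
    have htk : t < k + 1 := Nat.lt_floor_add_one t
    have key := hdev_sub_le_of_Hmap_sub_le (M * (M + 1)) (k + 1) 0 0 (-k)
      (fun m => by
        simpa only [add_zero, sub_eq_add_neg] using h.Hmap_add_succ_sub_le hpos hM m hk) x
    push_cast at key
    simp only [add_zero, ← sub_eq_add_neg] at key
    calc hdev δ (x + t) - hdev δ x ≤ hdev δ (x + (k + 1)) - hdev δ x := by
          gcongr; exact hmono (by linarith)
      _ ≤ M * (M + 1) * (hdev δ x - hdev δ (x - k)) := key
      _ ≤ M * (M + 1) * (hdev δ x - hdev δ (x - t)) := by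
          gcongr; exact hmono (by linarith)

lemma hdev_sub_sub_le (h : ShearQS δ M) (hpos : ∀ n, 0 < δ n) (hM : 1 ≤ M) (x : ℝ) {t : ℝ}
    (ht : 0 < t) : hdev δ x - hdev δ (x - t) ≤ M * (M + 1) * (hdev δ (x + t) - hdev δ x) := by
  have hmono := (hdev_strictMono hpos).monotone
  rcases le_or_gt t 1 with ht1 | ht1
  · obtain ⟨hA, hB⟩ := h.hdev_sub_mem_Icc_of_le_one hpos hM x ht.le ht1
    have hA0 : 0 ≤ hdev δ (x + t) - hdev δ x := sub_nonneg.2 (hmono (by linarith))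
    nlinarith [le_sq_mul_of_mem_Icc (by linarith) hB hA]
  · set k := ⌊t⌋₊
    have hk : 0 < k := Nat.floor_pos.2 ht1.le
    have hkt : (k : ℝ) ≤ t := Nat.floor_le ht.le
    have htk : t < k + 1 := Nat.lt_floor_add_one t
    have key := hdev_sub_le_of_Hmap_sub_le (M * (M + 1)) 0 (-(k + 1)) k 0
      (fun m => by
        simpa only [add_zero, sub_eq_add_neg] using h.Hmap_sub_succ_le hpos hM m hk) x
    push_cast at key
    simp only [add_zero, ← sub_eq_add_neg] at key
    calc hdev δ x - hdev δ (x - t) ≤ hdev δ x - hdev δ (x - (k + 1)) := by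
          gcongr; exact hmono (by linarith)
      _ ≤ M * (M + 1) * (hdev δ (x + k) - hdev δ x) := key
      _ ≤ M * (M + 1) * (hdev δ (x + t) - hdev δ x) := by
          gcongr; exact hmono (by linarith)

end ShearQS

theorem single_fan_quasisymmetric (M : ℝ) (hM : 1 ≤ M) (δ : ℤ → ℝ)
    (hpos : ∀ n, 0 < δ n) (hshear : ShearQS δ M) :
    QSCond (hdev δ) (max (3 * M ^ 3) (M ^ 10)) := by
  have hM0 : 0 < M := by linarith
  refine QSCond.mono (qsCond_of_sub_le (by positivity) (hdev_strictMono hpos)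
    (fun x t ht => hshear.hdev_add_sub_le hpos hM x ht)
    (fun x t ht => hshear.hdev_sub_sub_le hpos hM x ht)) (by positivity) (le_max_of_le_left ?_)
  nlinarith [mul_le_mul_of_nonneg_left hM (by positivity : 0 ≤ M ^ 2)]
end

section
/- Let M ≥ 1 and let δ : ℤ → ℝ be a sequence with δ n > 0 for all n that satisfies the quasisymmetric shear condition with constant M. Then both tails of δ diverge: the series Σ_{n=0}^{∞} δ_n and Σ_{n=1}^{∞} δ_{−n} are not summable. -/
/-! If the right tail `∑ δ n` converged, the blocks `δ m + ⋯ + δ (2m)` would tend to zero; but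
the shear condition at `m` with `k = m` compares such a block with `δ (m-1) + ⋯ + δ (-1)`, which
is at least `δ (-1)`. The reflection `n ↦ -n - 1` inverts every shear ratio, so it preserves the
condition and exchanges the two tails. -/

open Filter Finset Topology

theorem not_summable_of_le_sum_block {f : ℕ → ℝ} (hf : ∀ n, 0 ≤ f n) {ε : ℝ} (hε : 0 < ε)
    (hblock : ∀ m, ε ≤ ∑ i ∈ range (m + 1), f (i + m)) : ¬ Summable f := by
  intro hs
  obtain ⟨m, hm⟩ : ∃ m, ∑' i, f (i + m) < ε :=
    ((tendsto_sum_nat_add f).eventually (gt_mem_nhds hε)).exists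
  have htail : ∑ i ∈ range (m + 1), f (i + m) ≤ ∑' i, f (i + m) :=
    ((summable_nat_add_iff m).2 hs).sum_le_tsum _ fun i _ => hf _
  linarith [hblock m]

theorem div_bounds_symm {a b M : ℝ} (ha : 0 < a) (hb : 0 < b) (hM : 0 < M)
    (h : 1 / M ≤ a / b ∧ a / b ≤ M) : 1 / M ≤ b / a ∧ b / a ≤ M := by
  rw [← one_div_div b a, one_div_le_one_div hM (div_pos hb ha), one_div_le (div_pos hb ha) hM] at h
  exact h.symm

namespace ShearQS

variable {δ : ℤ → ℝ} {M : ℝ}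

theorem pos (hpos : ∀ n, 0 < δ n) (h : ShearQS δ M) : 0 < M :=
  (div_pos (sum_pos (fun _ _ => hpos _) nonempty_range_add_one)
    (sum_pos (fun _ _ => hpos _) nonempty_range_add_one)).trans_le (h 0 0).2

theorem reflect (hpos : ∀ n, 0 < δ n) (h : ShearQS δ M) :
    ShearQS (fun n => δ (-n - 1)) M := by
  intro m k
  have hM := h.pos hpos
  have hA : 0 < ∑ i ∈ range (k + 1), δ (-m + i) :=
    sum_pos (fun _ _ => hpos _) nonempty_range_add_one
  have hB : 0 < ∑ i ∈ range (k + 1), δ (-m - 1 - i) :=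
    sum_pos (fun _ _ => hpos _) nonempty_range_add_one
  have hfwd : ∑ i ∈ range (k + 1), δ (-(m + i) - 1) = ∑ i ∈ range (k + 1), δ (-m - 1 - i) :=
    sum_congr rfl fun i _ => by ring_nf
  have hbwd : ∑ i ∈ range (k + 1), δ (-(m - 1 - i) - 1) = ∑ i ∈ range (k + 1), δ (-m + i) :=
    sum_congr rfl fun i _ => by ring_nf
  rw [hfwd, hbwd]
  exact div_bounds_symm hA hB hM (h (-m) k)

theorem div_le_sum_block (hpos : ∀ n, 0 < δ n) (h : ShearQS δ M) (m : ℕ) :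
    δ (-1) / M ≤ ∑ i ∈ range (m + 1), δ ((i + m : ℕ) : ℤ) := by
  have hM := h.pos hpos
  set A := ∑ i ∈ range (m + 1), δ (m + i)
  set B := ∑ i ∈ range (m + 1), δ (m - 1 - i)
  have hB : 0 < B := sum_pos (fun _ _ => hpos _) nonempty_range_add_one
  have hδB : δ (-1) ≤ B := by
    simpa using single_le_sum (f := fun i : ℕ => δ (m - 1 - i)) (fun _ _ => (hpos _).le)
      (self_mem_range_succ m)
  have hBA : B / M ≤ A := by
    have := (h m m).1
    rw [div_le_div_iff₀ hM hB] at this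
    rw [div_le_iff₀ hM]
    linarith
  calc δ (-1) / M ≤ B / M := by gcongr
    _ ≤ A := hBA
    _ = _ := sum_congr rfl fun i _ => by push_cast; ring_nf

end ShearQS

theorem shear_condition_tails_diverge_general (M : ℝ) (δ : ℤ → ℝ)
    (hpos : ∀ n, 0 < δ n) (hshear : ShearQS δ M) :
    ¬ Summable (fun n : ℕ => δ (n : ℤ)) ∧
      ¬ Summable (fun n : ℕ => δ (-(n : ℤ) - 1)) := by
  have hM := hshear.pos hpos
  have hpos' : ∀ n, 0 < δ (-n - 1) := fun _ => hpos _
  exact ⟨not_summable_of_le_sum_block (fun _ => (hpos _).le) (div_pos (hpos _) hM)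
      (hshear.div_le_sum_block hpos),
    not_summable_of_le_sum_block (fun _ => (hpos' _).le) (div_pos (hpos' _) hM)
      ((hshear.reflect hpos).div_le_sum_block hpos')⟩

theorem shear_condition_tails_diverge (M : ℝ) (hM : 1 ≤ M) (δ : ℤ → ℝ)
    (hpos : ∀ n, 0 < δ n) (hshear : ShearQS δ M) :
    ¬ Summable (fun n : ℕ => δ (n : ℤ)) ∧
      ¬ Summable (fun n : ℕ => δ (-(n : ℤ) - 1)) :=
  shear_condition_tails_diverge_general M δ hpos hshear
end

section
/- Let f_n : ℝ → ℝ be a sequence of functions converging uniformly on every compact subset of ℝ to a continuous function f_∞ : ℝ → ℝ, let h_n : ℝ → ℝ be monotone nondecreasing for each n, and let λ_n > 0 with λ_n → ∞. Assume that for each n, h_n(x) = f_n(x) whenever λ_n·x ∈ ℤ. Then h_n → f_∞ uniformly on every compact interval of ℝ. -/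
/-!
Fix `x` in `[a, b]`. Once the mesh `1/λₙ` is below the modulus of continuity of `f_∞`, the grid
points `p ≤ x ≤ q` next to `x` satisfy `hₙ(p) = fₙ(p) ≈ f_∞(p) ≈ f_∞(x)`, and likewise at `q`;
monotonicity traps `hₙ(x)` between `hₙ(p)` and `hₙ(q)`, so it is close to `f_∞(x)` as well.
-/

open Filter Set

lemma abs_sub_lt_of_le_of_le {u y v c ε : ℝ} (huy : u ≤ y) (hyv : y ≤ v)
    (hu : |u - c| < ε) (hv : |v - c| < ε) : |y - c| < ε := by
  rw [abs_lt] at hu hv ⊢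
  constructor <;> linarith

theorem tendstoUniformlyOn_Icc_of_monotoneOn_of_eqOn {ι : Type*} {l : Filter ι}
    {F g : ι → ℝ → ℝ} {G : ℝ → ℝ} {D : ι → Set ℝ} {a b : ℝ}
    (hF : TendstoUniformlyOn F G l (Icc (a - 1) (b + 1)))
    (hG : ContinuousOn G (Icc (a - 1) (b + 1)))
    (hg : ∀ i, MonotoneOn (g i) (Icc (a - 1) (b + 1)))
    (hgF : ∀ i, EqOn (g i) (F i) (D i))
    (hD : ∀ δ > 0, ∀ᶠ i in l, ∀ x,
      (∃ p ∈ D i, p ∈ Ioc (x - δ) x) ∧ ∃ q ∈ D i, q ∈ Ico x (x + δ)) :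
    TendstoUniformlyOn g G l (Icc a b) := by
  set K := Icc (a - 1) (b + 1)
  rw [Metric.tendstoUniformlyOn_iff]
  intro ε hε
  obtain ⟨δ, hδ, hGδ⟩ := Metric.uniformContinuousOn_iff.mp
    (isCompact_Icc.uniformContinuousOn_of_continuous hG) (ε / 2) (half_pos hε)
  filter_upwards [Metric.tendstoUniformlyOn_iff.mp hF (ε / 2) (half_pos hε),
    hD (min δ 1) (lt_min hδ one_pos)] with i hFi hDi x hx
  obtain ⟨⟨p, hpD, hp⟩, ⟨q, hqD, hq⟩⟩ := hDi x
  have hmin_le_δ := min_le_left δ 1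
  have hmin_le_one := min_le_right δ 1
  have hxK : x ∈ K := ⟨by linarith [hx.1], by linarith [hx.2]⟩
  have hpK : p ∈ K := ⟨by linarith [hx.1, hp.1], by linarith [hx.2, hp.2]⟩
  have hqK : q ∈ K := ⟨by linarith [hx.1, hq.1], by linarith [hx.2, hq.2]⟩
  -- at a point `r` of `D i` within `δ` of `x`: `g i r = F i r ≈ G r ≈ G x`
  have near : ∀ r ∈ D i, r ∈ K → |x - r| < δ → |g i r - G x| < ε := by
    intro r hrD hrK hxr
    have hFr := hFi r hrK
    have hGr := hGδ x hxK r hrK hxr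
    rw [Real.dist_eq] at hFr hGr
    rw [hgF i hrD, abs_lt]
    rw [abs_lt] at hFr hGr
    constructor <;> linarith
  rw [dist_comm, Real.dist_eq]
  exact abs_sub_lt_of_le_of_le (hg i hpK hxK hp.2) (hg i hxK hqK hq.1)
    (near p hpD hpK (by rw [abs_lt]; constructor <;> linarith [hp.1, hp.2]))
    (near q hqD hqK (by rw [abs_lt]; constructor <;> linarith [hq.1, hq.2]))

lemma exists_int_div_mem_Ioc {c : ℝ} (hc : 0 < c) (x : ℝ) :
    ∃ p, (∃ m : ℤ, c * p = m) ∧ p ∈ Ioc (x - 1 / c) x := by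
  refine ⟨⌊c * x⌋ / c, ⟨⌊c * x⌋, mul_div_cancel₀ _ hc.ne'⟩, ?_, ?_⟩
  · rw [lt_div_iff₀ hc, sub_mul, one_div_mul_cancel hc.ne', mul_comm]
    linarith [Int.lt_floor_add_one (c * x)]
  · rw [div_le_iff₀ hc, mul_comm]
    exact Int.floor_le _

lemma exists_int_div_mem_Ico {c : ℝ} (hc : 0 < c) (x : ℝ) :
    ∃ q, (∃ m : ℤ, c * q = m) ∧ q ∈ Ico x (x + 1 / c) := by
  refine ⟨⌈c * x⌉ / c, ⟨⌈c * x⌉, mul_div_cancel₀ _ hc.ne'⟩, ?_, ?_⟩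
  · rw [le_div_iff₀ hc, mul_comm]
    exact Int.le_ceil _
  · rw [div_lt_iff₀ hc, add_mul, one_div_mul_cancel hc.ne', mul_comm]
    exact Int.ceil_lt_add_one _

lemma eventually_exists_int_div_near {ι : Type*} {l : Filter ι} {c : ι → ℝ}
    (hc : Tendsto c l atTop) {δ : ℝ} (hδ : 0 < δ) :
    ∀ᶠ i in l, ∀ x, (∃ p ∈ {y | ∃ m : ℤ, c i * y = m}, p ∈ Ioc (x - δ) x) ∧
      ∃ q ∈ {y | ∃ m : ℤ, c i * y = m}, q ∈ Ico x (x + δ) := by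
  filter_upwards [hc.eventually_gt_atTop (1 / δ)] with i hi x
  have hci : 0 < c i := (one_div_pos.mpr hδ).trans hi
  have hmesh : 1 / c i < δ := (one_div_lt hci hδ).mpr hi
  obtain ⟨p, hpD, hp⟩ := exists_int_div_mem_Ioc hci x
  obtain ⟨q, hqD, hq⟩ := exists_int_div_mem_Ico hci x
  exact ⟨⟨p, hpD, by linarith [hp.1], hp.2⟩, ⟨q, hqD, hq.1, by linarith [hq.2]⟩⟩

theorem grid_agreement_uniform_convergence_general (f : ℕ → ℝ → ℝ) (finf : ℝ → ℝ)
    (h : ℕ → ℝ → ℝ) (lam : ℕ → ℝ)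
    (hf : ∀ K : Set ℝ, IsCompact K → TendstoUniformlyOn f finf atTop K)
    (hfinf : Continuous finf)
    (hmono : ∀ n, Monotone (h n))
    (hlam : Tendsto lam atTop atTop)
    (hgrid : ∀ (n : ℕ) (x : ℝ), (∃ m : ℤ, lam n * x = (m : ℝ)) → h n x = f n x) :
    ∀ a b : ℝ, TendstoUniformlyOn h finf atTop (Set.Icc a b) := fun _ _ =>
  tendstoUniformlyOn_Icc_of_monotoneOn_of_eqOn (hf _ isCompact_Icc) hfinf.continuousOn
    (fun n => (hmono n).monotoneOn _) (fun n => hgrid n)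
    (fun _ hδ => eventually_exists_int_div_near hlam hδ)

theorem grid_agreement_uniform_convergence (f : ℕ → ℝ → ℝ) (finf : ℝ → ℝ)
    (h : ℕ → ℝ → ℝ) (lam : ℕ → ℝ)
    (hf : ∀ K : Set ℝ, IsCompact K → TendstoUniformlyOn f finf atTop K)
    (hfinf : Continuous finf)
    (hmono : ∀ n, Monotone (h n))
    (hlam_pos : ∀ n, 0 < lam n)
    (hlam : Tendsto lam atTop atTop)
    (hgrid : ∀ (n : ℕ) (x : ℝ), (∃ m : ℤ, lam n * x = (m : ℝ)) → h n x = f n x) :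
    ∀ a b : ℝ, TendstoUniformlyOn h finf atTop (Set.Icc a b) :=
  grid_agreement_uniform_convergence_general f finf h lam hf hfinf hmono hlam hgrid
end
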